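/- arXiv:math/0104046 — 2 statements merged into one kernel-verified Lean document; each statement's English description precedes it below -/
import Mathlib

section
/- Let X be an integral locally noetherian space with big injective E_X. If E is any indecomposable injective object of Mod X such that End(E) is a division ring and every object of Mod X is a subquotient of a coproduct of copies of E, then E is isomorphic to E_X. That is, the big injective is unique up to isomorphism. -/
open CategoryTheory CategoryTheory.Limits

universe w v u

section Preliminaries

variable {C : Type u} [Category.{v} C]

/-- An object of a category is *noetherian* if its lattice of subobjects satisfies
the ascending chain condition. -/
def IsNoetherianObject (N : C) : Prop := WellFoundedGT (Subobject N)

/-- A Grothendieck category (non-commutative space) is *locally noetherian* if it has a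
set of noetherian generators, i.e. a separating family of noetherian objects. -/
def LocallyNoetherian (C : Type u) [Category.{v} C] : Prop :=
  ∃ (ι : Type v) (G : ι → C), (∀ i, _root_.IsNoetherianObject (G i)) ∧
    ObjectProperty.IsSeparating (fun X => X ∈ Set.range G)

/-- `M` is a subquotient of `N`: a quotient of a subobject of `N`. -/
def IsSubquotient (N M : C) : Prop :=
  ∃ (S : Subobject N) (f : (S : C) ⟶ M), Epi f

end Preliminaries

/-- Any abelian category has finite biproducts. -/
instance (priority := 100) abelianHasFiniteBiproducts {C : Type u} [Category.{v} C]
    [Abelian C] : HasFiniteBiproducts C :=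
  HasFiniteBiproducts.of_hasFiniteProducts

section BigInjective

variable {C : Type u} [Category.{v} C] [Abelian C] [HasColimits C] [AB5 C]

/-- `E` is the *big injective* making the locally noetherian space `X` (with `Mod X = C`)
an integral space: `E` is an indecomposable injective object whose endomorphism ring is a
division ring, and every object is a subquotient of a coproduct of copies of `E`. -/
structure IsBigInjective (E : C) : Prop where
  injective : Injective E
  nonzero : ¬ IsZero E
  indecomposable : ∀ (A B : C), (E ≅ A ⊞ B) → IsZero A ∨ IsZero B
  division : ∀ f : E ⟶ E, f ≠ 0 → IsIso f
  generates : ∀ M : C, ∃ ι : Type v, IsSubquotient (∐ (fun _ : ι => E)) M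

/-- An object `M` is *torsion* (with respect to the big injective `E`) if `Hom(M, E) = 0`. -/
def IsTorsion (E M : C) : Prop := ∀ f : M ⟶ E, f = 0

/-- An object `M` is *torsion-free* if its only torsion subobject is `0`. -/
def IsTorsionFree (E M : C) : Prop := ∀ S : Subobject M, IsTorsion E (S : C) → S = ⊥

/-- The *rank* of `M`: the length of `Hom(M, E)` as a left module over the division ring
`End(E)`, expressed as the Krull dimension of its lattice of submodules. -/
noncomputable def rank (E M : C) : WithBot ℕ∞ :=
  Order.krullDim (Submodule (End E) (M ⟶ E))

/-- A subobject `L` of `M` is *essential* if every nonzero subobject of `M` meets it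
nontrivially. -/
def IsEssentialSubobject {M : C} (L : Subobject M) : Prop :=
  ∀ S : Subobject M, S ≠ ⊥ → S ⊓ L ≠ ⊥

end BigInjective

/-!
Write `E` for the first big injective and `E'` for the second. Since `E'` is injective and a
subquotient of a coproduct `∐ E`, it is a quotient of `∐ E`; symmetrically there is a nonzero
map `g : E' ⟶ E`. Composing the epimorphism `∐ E ⟶ E'` with `g` gives a nonzero map, so some
component `h : E ⟶ E'` has `h ≫ g ≠ 0`. As `End E` is a division ring, `h ≫ g` is invertible,
so `h` is a split monomorphism; then `E' ≅ E ⊞ cokernel h`, and the indecomposability of `E'`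
forces `cokernel h = 0`, i.e. `h` is an isomorphism.
-/

namespace CategoryTheory

variable {C : Type u} [Category.{v} C]

theorem IsSubquotient.exists_epi [Preadditive C] {N M : C} [Injective M]
    (hM : IsSubquotient N M) : ∃ f : N ⟶ M, Epi f := by
  obtain ⟨S, e, he⟩ := hM
  refine ⟨Injective.factorThru e S.arrow, ?_⟩
  have : Epi (S.arrow ≫ Injective.factorThru e S.arrow) := by
    rwa [Injective.comp_factorThru]
  exact epi_of_epi S.arrow _

theorem Limits.ne_zero_of_epi [HasZeroMorphisms C] {X Y : C} (f : X ⟶ Y) [Epi f]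
    (hY : ¬IsZero Y) : f ≠ 0 := by
  rintro rfl
  exact hY (IsZero.of_epi_zero X Y)

theorem Limits.Sigma.exists_ι_comp_ne_zero [HasZeroMorphisms C] {ι : Type*} {A : ι → C}
    [HasCoproduct A] {X : C} (f : ∐ A ⟶ X) (hf : f ≠ 0) : ∃ i, Sigma.ι A i ≫ f ≠ 0 := by
  by_contra! h
  exact hf (Sigma.hom_ext _ _ fun i => by rw [h i, comp_zero])

theorem isSplitMono_of_isIso_comp {X Y Z : C} (f : X ⟶ Y) (g : Y ⟶ Z) [IsIso (f ≫ g)] :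
    IsSplitMono f :=
  IsSplitMono.mk' ⟨g ≫ inv (f ≫ g), by rw [← Category.assoc, IsIso.hom_inv_id]⟩

theorem isIso_of_isSplitMono_of_indecomposable [Abelian C] {X Y : C} (f : X ⟶ Y)
    [IsSplitMono f] (hX : ¬IsZero X) (hY : ∀ A B : C, (Y ≅ A ⊞ B) → IsZero A ∨ IsZero B) :
    IsIso f := by
  let iso : Y ≅ X ⊞ cokernel f :=
    biprod.uniqueUpToIso _ _ (isBilimitBinaryBiconeOfIsSplitMonoOfCokernel (cokernelIsCokernel f))
  have hcok : IsZero (cokernel f) := (hY _ _ iso).resolve_left hX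
  have : Epi f := Abelian.epi_of_cokernel_π_eq_zero f (hcok.eq_zero_of_tgt _)
  exact isIso_of_mono_of_epi f

variable [Abelian C] [HasColimits C]

theorem IsBigInjective.exists_epi_sigma {E : C} (hE : IsBigInjective E) (M : C) [Injective M] :
    ∃ (ι : Type v) (F : (∐ fun _ : ι => E) ⟶ M), Epi F := by
  obtain ⟨ι, hM⟩ := hE.generates M
  obtain ⟨F, hF⟩ := hM.exists_epi
  exact ⟨ι, F, hF⟩

theorem IsBigInjective.exists_ne_zero_hom {E : C} (hE : IsBigInjective E) {M : C} [Injective M]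
    (hM : ¬IsZero M) : ∃ g : E ⟶ M, g ≠ 0 := by
  obtain ⟨ι, F, hF⟩ := hE.exists_epi_sigma M
  obtain ⟨i, hi⟩ := Sigma.exists_ι_comp_ne_zero F (ne_zero_of_epi F hM)
  exact ⟨_, hi⟩

end CategoryTheory

theorem statement3_general {C : Type u} [Category.{v} C] [Abelian C] [HasColimits C]
    (E : C) (hE : IsBigInjective E)
    (E' : C) (hE' : IsBigInjective E') :
    Nonempty (E' ≅ E) := by
  have := hE.injective
  have := hE'.injective
  obtain ⟨ι, F, hF⟩ := hE.exists_epi_sigma E'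
  obtain ⟨g, hg⟩ := hE'.exists_ne_zero_hom hE.nonzero
  have hFg : F ≫ g ≠ 0 := by rwa [Ne, ← comp_zero (f := F), cancel_epi]
  obtain ⟨i, hi⟩ := Sigma.exists_ι_comp_ne_zero (F ≫ g) hFg
  let h : E ⟶ E' := Sigma.ι (fun _ : ι => E) i ≫ F
  have : IsIso (h ≫ g) := hE.division _ (by rwa [Category.assoc])
  have := isSplitMono_of_isIso_comp h g
  have := isIso_of_isSplitMono_of_indecomposable h hE.nonzero hE'.indecomposable
  exact ⟨(asIso h).symm⟩

/-- Corollary 3.9. The big injective of an integral locally noetherian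
space is unique up to isomorphism. -/
theorem statement3 {C : Type u} [Category.{v} C] [Abelian C] [HasColimits C] [AB5 C]
    (hX : LocallyNoetherian C) (E : C) (hE : IsBigInjective E)
    (E' : C) (hE' : IsBigInjective E') :
    Nonempty (E' ≅ E) :=
  statement3_general E hE E' hE'
end

section
/- Let R be a right noetherian ring such that the category Mod R of right R-modules is integral with big injective E. Suppose δ is a dimension function on Mod R satisfying δ(M ⊗_R I) ≤ δ(M) for every noetherian right R-module M and every two-sided ideal I of R, and suppose E is critical with respect to δ. Then R is a prime ring. -/
open CategoryTheory CategoryTheory.Limits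

universe w v u

open scoped ENNReal

/-- A *dimension function* (Definition 6.1): a function `δ` from objects to
`{-∞} ∪ [0,∞]` such that `δ(0) = -∞`, `δ(M) = max (δ L) (δ N)` on short exact sequences
`0 → L → M → N → 0`, and `δ(M)` is the supremum of the `δ`-values of the noetherian
subobjects of `M`. -/
structure DimensionFunction (C : Type u) [Category.{v} C] [Abelian C] where
  /-- the underlying function on objects -/
  δ : C → WithBot ℝ≥0∞
  zero : ∀ M : C, IsZero M → δ M = ⊥
  exact : ∀ S : CategoryTheory.ShortComplex C, S.ShortExact →
    δ S.X₂ = max (δ S.X₁) (δ S.X₃)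
  noeth_sup : ∀ M : C,
    IsLUB {d | ∃ S : Subobject M, _root_.IsNoetherianObject (S : C) ∧ d = δ (S : C)} (δ M)

/-- An object `E` is *critical* for a dimension function `δ` if `δ (E/N) < δ E` for every
nonzero subobject `N` of `E`. -/
def IsCritical {C : Type u} [Category.{v} C] [Abelian C] (δ : DimensionFunction C)
    (E : C) : Prop :=
  ∀ S : Subobject E, S ≠ ⊥ → δ.δ (cokernel S.arrow) < δ.δ E

/-- `T`, together with the bi-additive balanced map `b : M × I → T`, is the tensor product
`M ⊗_R I` of a right `R`-module `M` (realized as a left `Rᵐᵒᵖ`-module) and a two-sided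
ideal `I` of `R`, with right `R`-module structure induced from that of `I`.  This is
expressed by the universal property of the balanced product. -/
structure IsTensorProductWithIdeal (R : Type u) [Ring R] (I : TwoSidedIdeal R)
    (M : Type u) [AddCommGroup M] [Module Rᵐᵒᵖ M]
    (T : Type u) [AddCommGroup T] [Module Rᵐᵒᵖ T]
    (b : M → I → T) : Prop where
  add_left : ∀ (m m' : M) (x : I), b (m + m') x = b m x + b m' x
  add_right : ∀ (m : M) (x y : I), b m (x + y) = b m x + b m y
  balanced : ∀ (m : M) (r : R) (x : I), b (MulOpposite.op r • m) x = b m (r • x)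
  smul_right : ∀ (m : M) (x : I) (r : R),
    b m (MulOpposite.op r • x) = MulOpposite.op r • b m x
  universal : ∀ (P : Type u) [AddCommGroup P] [Module Rᵐᵒᵖ P] (c : M → I → P),
    (∀ (m m' : M) (x : I), c (m + m') x = c m x + c m' x) →
    (∀ (m : M) (x y : I), c m (x + y) = c m x + c m y) →
    (∀ (m : M) (r : R) (x : I), c (MulOpposite.op r • m) x = c m (r • x)) →
    (∀ (m : M) (x : I) (r : R),
      c m (MulOpposite.op r • x) = MulOpposite.op r • c m x) →
    ∃! f : T →ₗ[Rᵐᵒᵖ] P, ∀ (m : M) (x : I), f (b m x) = c m x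

/-! Suppose `I, J ≠ 0` and `IJ = 0`. Every module is a subquotient of copies of `E`, so no nonzero
element of `R` kills `E`: the submodule `G = {g ∈ E | gJ = 0}` contains some `e'x ≠ 0`, and
some `e ∈ E` has `eJ ≠ 0`. Put `A = {r ∈ R | er ∈ G}`. Then `R/A` embeds in `E/G`, so
`δ(R/A) < δ(E)` because `E` is critical. On the other hand `z ↦ ez` induces a nonzero map
`(R/A) ⊗_R J = J/AJ → E`, whose image again has dimension `δ(E)`. Hence
`δ(E) ≤ δ((R/A) ⊗_R J) ≤ δ(R/A) < δ(E)`. -/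

open MulOpposite ZeroObject

namespace DimensionFunction

section Abelian

variable {C : Type u} [Category.{v} C] [Abelian C] (δ : DimensionFunction C)

theorem eq_of_iso {A B : C} (e : A ≅ B) : δ.δ A = δ.δ B := by
  have hS : (ShortComplex.mk e.hom (0 : B ⟶ 0) comp_zero).ShortExact :=
    { exact := (ShortComplex.exact_iff_epi _ rfl).2 inferInstance }
  rw [δ.exact _ hS, δ.zero _ (isZero_zero C), max_bot_right]

end Abelian

section Module

variable {S : Type w} [Ring S] (δ : DimensionFunction (ModuleCat.{v} S))
  {X Y : Type v} [AddCommGroup X] [Module S X] [AddCommGroup Y] [Module S Y]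

theorem eq_max_submodule_quotient (W : Submodule S X) :
    δ.δ (.of S X) = max (δ.δ (.of S W)) (δ.δ (.of S (X ⧸ W))) :=
  δ.exact _ <| ModuleCat.shortComplex_shortExact
    (ModuleCat.shortComplexOfCompEqZero W.subtype W.mkQ (by ext; simp))
    (LinearMap.exact_subtype_mkQ W) W.injective_subtype W.mkQ_surjective

theorem submodule_le (W : Submodule S X) : δ.δ (.of S W) ≤ δ.δ (.of S X) :=
  (δ.eq_max_submodule_quotient W).symm ▸ le_max_left _ _

theorem quotient_le (W : Submodule S X) : δ.δ (.of S (X ⧸ W)) ≤ δ.δ (.of S X) :=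
  (δ.eq_max_submodule_quotient W).symm ▸ le_max_right _ _

theorem le_of_injective {f : X →ₗ[S] Y} (hf : Function.Injective f) :
    δ.δ (.of S X) ≤ δ.δ (.of S Y) :=
  (δ.eq_of_iso (LinearEquiv.ofInjective f hf).toModuleIso).trans_le (δ.submodule_le _)

theorem le_of_surjective {f : X →ₗ[S] Y} (hf : Function.Surjective f) :
    δ.δ (.of S Y) ≤ δ.δ (.of S X) :=
  (δ.eq_of_iso (f.quotKerEquivOfSurjective hf).toModuleIso).symm.trans_le (δ.quotient_le _)

end Module

end DimensionFunction

namespace IsCritical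

variable {S : Type w} [Ring S] {δ : DimensionFunction (ModuleCat.{v} S)} {E : ModuleCat.{v} S}
  {X : Type v} [AddCommGroup X] [Module S X]

theorem quotient_lt (hE : IsCritical δ E) {W : Submodule S E} (hW : W ≠ ⊥) :
    δ.δ (.of S (E ⧸ W)) < δ.δ E := by
  set P := (ModuleCat.subobjectModule E).symm W
  have hP : LinearMap.range P.arrow.hom = W := (ModuleCat.subobjectModule E).apply_symm_apply W
  have hP0 : P ≠ ⊥ := by simpa [P] using hW
  refine (δ.eq_of_iso ?_).symm.trans_lt (hE P hP0)
  exact ModuleCat.cokernelIsoRangeQuotient _ ≪≫ (Submodule.quotEquivOfEq _ _ hP).toModuleIso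

theorem le_of_ne_zero (hE : IsCritical δ E) {f : X →ₗ[S] E} (hf : f ≠ 0) :
    δ.δ E ≤ δ.δ (.of S X) := by
  have hrange : LinearMap.range f ≠ ⊥ := by rwa [ne_eq, LinearMap.range_eq_bot]
  have hmax : δ.δ E = _ := δ.eq_max_submodule_quotient (LinearMap.range f)
  have hlt := hE.quotient_lt hrange
  rw [hmax, lt_max_iff, lt_self_iff_false, or_false] at hlt
  rw [hmax, max_eq_left hlt.le]
  exact δ.le_of_surjective f.surjective_rangeRestrict

end IsCritical

section Faithful

variable {S : Type u} [Ring S] {x : S}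

theorem smul_eq_zero_of_isSubquotient {N M : ModuleCat.{v} S} (h : IsSubquotient N M)
    (hx : ∀ n : N, x • n = 0) (m : M) : x • m = 0 := by
  obtain ⟨P, f, hf⟩ := h
  obtain ⟨p, rfl⟩ := (ModuleCat.epi_iff_surjective f).1 hf m
  have hp : x • p = 0 := (ModuleCat.mono_iff_injective P.arrow).1 inferInstance <| by
    rw [map_smul, hx, map_zero]
  rw [← map_smul, hp, map_zero]

theorem smul_eq_zero_of_sigmaConst {ι : Type v} {E : ModuleCat.{v} S}
    (hx : ∀ e : E, x • e = 0) (m : (∐ fun _ : ι => E : ModuleCat.{v} S)) :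
    x • m = 0 := by
  classical
  apply (ModuleCat.coprodIsoDirectSum fun _ : ι => E).toLinearEquiv.injective
  ext i
  rw [map_smul, map_zero, DirectSum.smul_apply, hx, DirectSum.zero_apply]

theorem eq_zero_of_forall_smul_eq_zero {E : ModuleCat.{u} S}
    (hE : ∀ M : ModuleCat.{u} S, ∃ ι : Type u, IsSubquotient (∐ fun _ : ι => E) M)
    (hx : ∀ e : E, x • e = 0) : x = 0 := by
  obtain ⟨ι, h⟩ := hE (.of S S)
  simpa using smul_eq_zero_of_isSubquotient h (smul_eq_zero_of_sigmaConst hx) (1 : S)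

end Faithful

theorem isNoetherianObject_of_isNoetherian {S : Type u} [Ring S] (M : ModuleCat.{v} S)
    [IsNoetherian S M] : _root_.IsNoetherianObject M :=
  have : WellFoundedGT (Submodule S M) := isNoetherian_iff'.mp inferInstance
  (ModuleCat.subobjectModule M).toOrderEmbedding.wellFoundedGT

section TwoSidedIdeal

variable {R : Type u} [Ring R] (J : TwoSidedIdeal R)

theorem TwoSidedIdeal.exists_smul_ne_zero {E : ModuleCat.{u} Rᵐᵒᵖ}
    (hE : ∀ M : ModuleCat.{u} Rᵐᵒᵖ, ∃ ι : Type u, IsSubquotient (∐ fun _ : ι => E) M)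
    (hJ : J ≠ ⊥) : ∃ (e : E) (y : R), y ∈ J ∧ MulOpposite.op y • e ≠ 0 := by
  by_contra! h
  refine hJ (eq_bot_iff.2 fun y hy => (mem_bot R).2 ?_)
  exact op_injective (eq_zero_of_forall_smul_eq_zero hE (h · y hy))

def TwoSidedIdeal.torsionBy (M : Type v) [AddCommGroup M] [Module Rᵐᵒᵖ M] :
    Submodule Rᵐᵒᵖ M where
  carrier := {g | ∀ z ∈ J, MulOpposite.op z • g = 0}
  add_mem' hg hh z hz := by rw [smul_add, hg z hz, hh z hz, add_zero]
  zero_mem' _ _ := smul_zero _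
  smul_mem' r g hg z hz := by
    rw [← op_unop r, ← mul_smul, ← op_mul]
    exact hg _ (J.mul_mem_left _ _ hz)

end TwoSidedIdeal

section QuotientTensorIdeal

variable {R : Type u} [Ring R] (A : Submodule Rᵐᵒᵖ Rᵐᵒᵖ) (J : TwoSidedIdeal R)

/-- `AJ ⊆ J` for a right ideal `A`; `J ⧸ AJ` is the tensor product `(R/A) ⊗_R J`. -/
def rightIdealMul : Submodule Rᵐᵒᵖ J :=
  Submodule.span Rᵐᵒᵖ {z | ∃ a ∈ A, ∃ w : J, z = a.unop • w}

def quotientTensorIdeal (m : Rᵐᵒᵖ ⧸ A) (z : J) : J ⧸ rightIdealMul A J :=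
  Quotient.liftOn' m (fun ρ => Submodule.Quotient.mk (ρ.unop • z)) fun ρ σ h => by
    rw [Submodule.Quotient.eq, ← sub_smul, ← MulOpposite.unop_sub]
    exact Submodule.subset_span ⟨ρ - σ, (Submodule.quotientRel_def A).1 h, z, rfl⟩

@[simp]
theorem quotientTensorIdeal_mk (ρ : Rᵐᵒᵖ) (z : J) :
    quotientTensorIdeal A J (Submodule.Quotient.mk ρ) z = Submodule.Quotient.mk (ρ.unop • z) :=
  rfl

theorem isTensorProductWithIdeal_quotient :
    IsTensorProductWithIdeal R J (Rᵐᵒᵖ ⧸ A) (J ⧸ rightIdealMul A J)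
      (quotientTensorIdeal A J) where
  add_left m m' z := by
    induction m using Submodule.Quotient.induction_on
    induction m' using Submodule.Quotient.induction_on
    simp [← Submodule.Quotient.mk_add, add_smul]
  add_right m z w := by
    induction m using Submodule.Quotient.induction_on
    simp [← Submodule.Quotient.mk_add, smul_add]
  balanced m r z := by
    induction m using Submodule.Quotient.induction_on
    simp [← Submodule.Quotient.mk_smul, mul_smul]
  smul_right m z r := by
    induction m using Submodule.Quotient.induction_on
    simp [← Submodule.Quotient.mk_smul, smul_comm]
  universal P _ _ c _ hc2 hc3 hc4 := by
    have hc (ρ : Rᵐᵒᵖ) (z : J) :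
        c (Submodule.Quotient.mk ρ) z = c (Submodule.Quotient.mk 1) (ρ.unop • z) := by
      rw [← hc3, ← Submodule.Quotient.mk_smul, op_unop, smul_eq_mul, mul_one]
    let g : J →ₗ[Rᵐᵒᵖ] P :=
      { toFun := c (Submodule.Quotient.mk 1)
        map_add' := hc2 _
        map_smul' r z := by simpa using hc4 (Submodule.Quotient.mk 1) z r.unop }
    have hg : rightIdealMul A J ≤ LinearMap.ker g := by
      refine Submodule.span_le.2 ?_
      rintro _ ⟨a, ha, w, rfl⟩
      change c _ _ = 0
      rw [← hc, (Submodule.Quotient.mk_eq_zero A).2 ha, ← Submodule.Quotient.mk_zero, hc,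
        MulOpposite.unop_zero, zero_smul]
      exact g.map_zero
    refine ⟨(rightIdealMul A J).liftQ g hg, ?_, fun f hf => ?_⟩
    · rintro ⟨ρ⟩ z
      exact (hc ρ z).symm
    · refine Submodule.linearMap_qext _ (LinearMap.ext fun z => ?_)
      simpa [g] using hf (Submodule.Quotient.mk 1) z

end QuotientTensorIdeal

theorem rightIdealMul_comap_torsionBy_le_ker {R : Type u} [Ring R] (J : TwoSidedIdeal R)
    {M : Type v} [AddCommGroup M] [Module Rᵐᵒᵖ M] (e : M) :
    rightIdealMul ((J.torsionBy M).comap (LinearMap.toSpanSingleton Rᵐᵒᵖ M e)) J ≤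
      LinearMap.ker ((LinearMap.toSpanSingleton Rᵐᵒᵖ M e).comp J.subtypeMop) := by
  refine Submodule.span_le.2 ?_
  rintro _ ⟨a, ha, w, rfl⟩
  change op (a.unop * w) • e = 0
  rw [op_mul, op_unop, mul_smul]
  exact ha w w.2

/-- Proposition 6.6. Let `R` be a right noetherian ring such that
`Mod R` (realized as left modules over `Rᵐᵒᵖ`) is integral with big injective `E`.
Suppose `δ` is a dimension function on `Mod R` such that `δ(M ⊗_R I) ≤ δ(M)` for every
noetherian right `R`-module `M` and every two-sided ideal `I` of `R`, and suppose `E` is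
critical with respect to `δ`.  Then `R` is a prime ring. -/
theorem statement19 (R : Type u) [Ring R] [IsNoetherianRing Rᵐᵒᵖ]
    (E : ModuleCat.{u} Rᵐᵒᵖ) (hE : IsBigInjective E)
    (δ : DimensionFunction (ModuleCat.{u} Rᵐᵒᵖ))
    (htensor : ∀ (M : ModuleCat.{u} Rᵐᵒᵖ), _root_.IsNoetherianObject M →
      ∀ (I : TwoSidedIdeal R) (T : Type u) [AddCommGroup T] [Module Rᵐᵒᵖ T]
        (b : M → I → T),
        IsTensorProductWithIdeal R I M T b →
        δ.δ (ModuleCat.of Rᵐᵒᵖ T) ≤ δ.δ M)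
    (hcrit : IsCritical δ E) :
    ∀ I J : TwoSidedIdeal R, (∀ x ∈ I, ∀ y ∈ J, x * y = 0) → I = ⊥ ∨ J = ⊥ := by
  intro I J hIJ
  by_contra! hne
  obtain ⟨e', x, hx, hxe'⟩ := I.exists_smul_ne_zero hE.generates hne.1
  obtain ⟨e, y, hy, hye⟩ := J.exists_smul_ne_zero hE.generates hne.2
  set G := J.torsionBy E
  set ψ := LinearMap.toSpanSingleton Rᵐᵒᵖ E e
  set A := G.comap ψ
  have hG : G ≠ ⊥ := by
    refine (Submodule.ne_bot_iff G).2 ⟨op x • e', fun z hz => ?_, hxe'⟩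
    rw [← mul_smul, ← op_mul, hIJ x hx z hz, MulOpposite.op_zero, zero_smul]
  have hA : δ.δ (.of _ (Rᵐᵒᵖ ⧸ A)) < δ.δ E := by
    refine (δ.le_of_injective (f := A.mapQ G ψ le_rfl) ?_).trans_lt (hcrit.quotient_lt hG)
    rw [← LinearMap.ker_eq_bot, Submodule.ker_mapQ, Submodule.mkQ_map_self]
  have hT : δ.δ E ≤ δ.δ (.of _ (J ⧸ rightIdealMul A J)) := by
    refine hcrit.le_of_ne_zero
      (f := (rightIdealMul A J).liftQ _ (rightIdealMul_comap_torsionBy_le_ker J e)) fun h => ?_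
    exact hye (LinearMap.congr_fun h (Submodule.Quotient.mk ⟨y, hy⟩))
  exact (hT.trans (htensor _ (isNoetherianObject_of_isNoetherian _) J _ _
    (isTensorProductWithIdeal_quotient A J))).not_gt hA
end
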